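/- arXiv:1807.05594 — 4 statements merged into one kernel-verified Lean document; each statement's English description precedes it below -/
import Mathlib

section
/- For a nearest-neighbor random walk (S_k) on the integers with S_0 = 1, step +1 with probability p and -1 with probability 1-p, the probability that S_k ≥ 1 for all k ≤ 2n equals p^{2n} + Σ_{a=0}^{n-1} [C(2n, n+a) - C(2n, n+a+1)] p^{n+a} (1-p)^{n-a}. -/
open scoped Classical

/-- Position of a nearest-neighbor walk started at 1 after `k` steps given by `ε`
(`true` = step `+1`, `false` = step `-1`). -/
noncomputable def walkPos (n : ℕ) (ε : Fin n → Bool) (k : ℕ) : ℤ :=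
  1 + ∑ i : Fin n, if (i : ℕ) < k then (if ε i then (1 : ℤ) else -1) else 0

/-- Probability that the walk with up-probability `p` started at `1` satisfies
`S_k ≥ 1` for all `k ≤ 2n`. -/
noncomputable def stayPosProb (p : ℝ) (n : ℕ) : ℝ :=
  ∑ ε : Fin (2 * n) → Bool,
    if ∀ k ≤ 2 * n, 1 ≤ walkPos (2 * n) ε k then
      p ^ (Finset.univ.filter fun i => ε i = true).card *
        (1 - p) ^ (Finset.univ.filter fun i => ε i = false).card
    else 0

/-!
Group the paths by their number `k` of up-steps. The number of positive paths of length `m`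
with `k` up-steps vanishes for `2k < m` (the endpoint `1 + 2k - m` would be `≤ 0`), and for
`m ≤ 2k + 1` it obeys Pascal's rule `c(m+1, k+1) = c(m, k) + c(m, k+1)`, because in that range
appending either step to a positive path keeps it positive. The ballot numbers
`C(m, k) - C(m, k+1)` obey the same rule and vanish at `m = 2k + 1` by the symmetry of
binomial coefficients, so the two agree.
-/

open Finset

namespace StayPos

variable {m : ℕ}

def upCount (ε : Fin m → Bool) : ℕ := #{i | ε i = true}

def StaysPos (ε : Fin m → Bool) : Prop := ∀ k ≤ m, 1 ≤ walkPos m ε k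

noncomputable def stayPosCount (m k : ℕ) : ℕ :=
  #{ε : Fin m → Bool | StaysPos ε ∧ upCount ε = k}

lemma upCount_le (ε : Fin m → Bool) : upCount ε ≤ m := (card_filter_le _ _).trans_eq (by simp)

lemma card_filter_eq_false (ε : Fin m → Bool) : #{i | ε i = false} = m - upCount ε := by
  have h := card_filter_add_card_filter_not (s := univ) (fun i => ε i = true)
  simp only [Bool.not_eq_true, card_univ, Fintype.card_fin] at h
  rw [upCount]
  omega

lemma upCount_snoc (ε : Fin m → Bool) (b : Bool) :
    upCount (Fin.snoc ε b : Fin (m + 1) → Bool) = upCount ε + if b then 1 else 0 := by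
  simp only [upCount, card_filter, Fin.sum_univ_castSucc, Fin.snoc_castSucc, Fin.snoc_last]

lemma walkPos_of_le (ε : Fin m → Bool) {k : ℕ} (hk : m ≤ k) :
    walkPos m ε k = 1 + 2 * upCount ε - m := by
  have hsum : ∑ i : Fin m, (if ε i then (1 : ℤ) else -1) = upCount ε - #{i | ε i = false} := by
    simp [sum_ite, upCount, sub_eq_add_neg]
  have hlt (i : Fin m) : (i : ℕ) < k := i.is_lt.trans_le hk
  simp only [walkPos, hlt, if_true, hsum, card_filter_eq_false]
  push_cast [upCount_le ε]
  ring

lemma walkPos_snoc (ε : Fin m → Bool) (b : Bool) (k : ℕ) :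
    walkPos (m + 1) (Fin.snoc ε b) k =
      walkPos m ε k + if m < k then (if b then 1 else -1) else 0 := by
  simp only [walkPos, Fin.sum_univ_castSucc, Fin.snoc_castSucc, Fin.snoc_last, Fin.val_castSucc,
    Fin.val_last]
  ring

lemma staysPos_snoc_iff (ε : Fin m → Bool) (b : Bool) :
    StaysPos (Fin.snoc ε b : Fin (m + 1) → Bool) ↔
      StaysPos ε ∧ 1 ≤ walkPos (m + 1) (Fin.snoc ε b) (m + 1) := by
  refine ⟨fun h => ⟨fun k hk => ?_, h _ le_rfl⟩, fun ⟨h, hlast⟩ k hk => ?_⟩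
  · simpa [walkPos_snoc, hk.not_gt] using h k (by omega)
  · obtain hk | rfl := hk.lt_or_eq
    · simpa [walkPos_snoc, show ¬m < k by omega] using h k (by omega)
    · exact hlast

lemma stayPosCount_eq_zero {m k : ℕ} (h : 2 * k < m) : stayPosCount m k = 0 := by
  refine card_eq_zero.mpr (filter_eq_empty_iff.mpr fun ε _ ⟨hpos, hk⟩ => ?_)
  have := hpos m le_rfl
  rw [walkPos_of_le ε le_rfl, hk] at this
  omega

lemma stayPosCount_succ_succ {m k : ℕ} (h : m ≤ 2 * k + 1) :
    stayPosCount (m + 1) (k + 1) = stayPosCount m k + stayPosCount m (k + 1) := by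
  simp only [stayPosCount, card_filter]
  rw [← (Fin.snocEquiv fun _ => Bool).sum_comp, Fintype.sum_prod_type, Fintype.sum_bool]
  congr 1 <;> refine sum_congr rfl fun ε _ => if_congr ?_ rfl rfl
  all_goals
    simp only [Fin.snocEquiv, Equiv.coe_fn_mk, staysPos_snoc_iff, walkPos_of_le _ le_rfl,
      upCount_snoc, and_assoc]
    push_cast
    exact and_congr_right fun _ => by omega

theorem stayPosCount_eq {m k : ℕ} (h : m ≤ 2 * k + 1) :
    (stayPosCount m k : ℤ) = m.choose k - m.choose (k + 1) := by
  induction m generalizing k with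
  | zero => cases k <;> simp [stayPosCount, StaysPos, walkPos, upCount]
  | succ m ih =>
    rcases Nat.lt_or_ge (m + 1) (2 * k + 1) with hlt | hge
    · obtain _ | k := k
      · omega
      rw [stayPosCount_succ_succ (by omega), Nat.cast_add, ih (by omega), ih (by omega),
        Nat.choose_succ_succ' m k, Nat.choose_succ_succ' m (k + 1)]
      push_cast
      ring
    · obtain rfl : m = 2 * k := by omega
      rw [stayPosCount_eq_zero (by omega), Nat.choose_symm_half]
      simp

lemma stayPosProb_eq_sum_stayPosCount (p : ℝ) (n : ℕ) :
    stayPosProb p n =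
      ∑ k ∈ range (2 * n + 1), stayPosCount (2 * n) k * (p ^ k * (1 - p) ^ (2 * n - k)) := by
  rw [stayPosProb, ← sum_filter, ← sum_fiberwise_of_maps_to (g := upCount)
    (t := range (2 * n + 1)) fun ε _ => mem_range.mpr (Nat.lt_succ_of_le (upCount_le ε))]
  refine sum_congr rfl fun k _ => ?_
  rw [stayPosCount, filter_filter, ← nsmul_eq_mul, ← sum_const]
  refine sum_congr (filter_congr fun _ _ => Iff.rfl) fun ε hε => ?_
  rw [← (mem_filter.mp hε).2.2, card_filter_eq_false]
  rfl

end StayPos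

theorem stayPosProb_eq_general (p : ℝ) (n : ℕ) :
    stayPosProb p n =
      p ^ (2 * n) + ∑ a ∈ Finset.range n,
        (((2 * n).choose (n + a) : ℝ) - ((2 * n).choose (n + a + 1) : ℝ)) *
          p ^ (n + a) * (1 - p) ^ (n - a) := by
  have hcount (a : ℕ) (ha : a ≤ n) : (StayPos.stayPosCount (2 * n) (n + a) : ℝ) =
      (2 * n).choose (n + a) - (2 * n).choose (n + a + 1) := by
    exact_mod_cast StayPos.stayPosCount_eq (by omega)
  rw [StayPos.stayPosProb_eq_sum_stayPosCount, show 2 * n + 1 = n + (n + 1) by ring,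
    sum_range_add, sum_eq_zero fun k hk => by
      rw [StayPos.stayPosCount_eq_zero (by simp at hk; omega)]; simp,
    zero_add, sum_range_succ, add_comm]
  congr 1
  · rw [hcount n le_rfl, ← two_mul, Nat.choose_self, Nat.choose_succ_self]
    simp
  · refine sum_congr rfl fun a ha => ?_
    rw [hcount a (mem_range.mp ha).le, show 2 * n - (n + a) = n - a by omega]
    ring

theorem stayPosProb_eq (p : ℝ) (hp0 : 0 < p) (hp1 : p < 1) (n : ℕ) :
    stayPosProb p n =
      p ^ (2 * n) + ∑ a ∈ Finset.range n,
        (((2 * n).choose (n + a) : ℝ) - ((2 * n).choose (n + a + 1) : ℝ)) *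
          p ^ (n + a) * (1 - p) ^ (n - a) :=
  stayPosProb_eq_general p n
end

section
/- For a nearest-neighbor random walk started at 1 with up-probability p < 1/2, the probability q_n that the walk stays strictly positive for 2n steps satisfies q_n ≤ C_p · (4p(1-p))^n / n^{3/2} for some constant C_p > 0 depending only on p, for all n ≥ 1. -/
open scoped Classical

/-!
Encode a path by its steps and count paths by their number `t` of up-steps: each path with
`t` up-steps has probability `p ^ t (1 - p) ^ (2n - t)`. A path staying positive ends at or above
its start, so `t = n + j` with `j ≥ 0`. By the reflection principle (flip the path up to its first
visit to the level above the start) the number of such paths is at most the ballot number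
`C(2n, n+j) - C(2n, n+j+1) ≤ (2j+1) C(2n, n) / (n+1)`, which is of order `(2j+1) 4^n / n^{3/2}`.
The weight is `(p(1-p))^n (p/(1-p))^j`, so summing over `j` gives the bound with
`C_p = ∑ (2j+1) (p/(1-p))^j`.
-/

open Finset

theorem Nat.centralBinom_sq_mul_le (n : ℕ) : n.centralBinom ^ 2 * (3 * n + 1) ≤ 16 ^ n := by
  induction n with
  | zero => simp
  | succ n ih =>
    have hrec := Nat.succ_mul_centralBinom_succ n
    have hpoly : (2 * n + 1) ^ 2 * (3 * n + 4) ≤ 4 * (n + 1) ^ 2 * (3 * n + 1) := by ring_nf; omega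
    have key : ((n + 1) * (n + 1).centralBinom) ^ 2 * (3 * (n + 1) + 1) ≤
        (n + 1) ^ 2 * 16 ^ (n + 1) := by
      rw [hrec, pow_succ]
      calc (2 * (2 * n + 1) * n.centralBinom) ^ 2 * (3 * (n + 1) + 1)
          = 4 * (n.centralBinom ^ 2) * ((2 * n + 1) ^ 2 * (3 * n + 4)) := by ring
        _ ≤ 4 * (n.centralBinom ^ 2) * (4 * (n + 1) ^ 2 * (3 * n + 1)) := by gcongr
        _ = (n + 1) ^ 2 * 16 * (n.centralBinom ^ 2 * (3 * n + 1)) := by ring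
        _ ≤ (n + 1) ^ 2 * 16 * 16 ^ n := by gcongr
        _ = (n + 1) ^ 2 * (16 ^ n * 16) := by ring
    rw [mul_pow, mul_assoc] at key
    exact Nat.le_of_mul_le_mul_left key (by positivity)

theorem Nat.centralBinom_div_succ_le {n : ℕ} (hn : 0 < n) :
    (n.centralBinom : ℝ) / (n + 1) ≤ 4 ^ n / (n : ℝ) ^ ((3 : ℝ) / 2) := by
  have hsq : n.centralBinom ^ 2 * n ^ 3 ≤ (4 ^ n * (n + 1)) ^ 2 :=
    calc n.centralBinom ^ 2 * n ^ 3 ≤ n.centralBinom ^ 2 * (3 * n + 1) * (n + 1) ^ 2 := by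
          rw [mul_assoc]; gcongr; nlinarith
      _ ≤ 16 ^ n * (n + 1) ^ 2 := by gcongr; exact n.centralBinom_sq_mul_le
      _ = (4 ^ n * (n + 1)) ^ 2 := by rw [mul_pow, ← pow_mul, mul_comm n 2, pow_mul]; norm_num
  have hpow : ((n : ℝ) ^ ((3 : ℝ) / 2)) ^ 2 = n ^ 3 := by
    rw [← Real.rpow_natCast, ← Real.rpow_mul (Nat.cast_nonneg n)]; norm_num
  rw [div_le_div_iff₀ (by positivity) (by positivity)]
  refine (pow_le_pow_iff_left₀ (by positivity) (by positivity) two_ne_zero).mp ?_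
  rw [mul_pow, hpow]
  exact_mod_cast hsq

namespace StayPositive

variable {N : ℕ}

noncomputable def partialSum (ε : Fin N → Bool) (k : ℕ) : ℤ :=
  ∑ i : Fin N, if (i : ℕ) < k then (if ε i then (1 : ℤ) else -1) else 0

def upCount (ε : Fin N → Bool) : ℕ := #{i | ε i = true}

def StaysNonneg (ε : Fin N → Bool) : Prop := ∀ k ≤ N, 0 ≤ partialSum ε k

def flipBefore (m : ℕ) (ε : Fin N → Bool) : Fin N → Bool :=
  fun i => if (i : ℕ) < m then !ε i else ε i

lemma flipBefore_flipBefore (m : ℕ) (ε : Fin N → Bool) : flipBefore m (flipBefore m ε) = ε := by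
  funext i
  by_cases h : (i : ℕ) < m <;> simp [flipBefore, h]

lemma partialSum_zero (ε : Fin N → Bool) : partialSum ε 0 = 0 := by
  simp [partialSum]

lemma partialSum_succ_le (ε : Fin N → Bool) (k : ℕ) :
    partialSum ε (k + 1) ≤ partialSum ε k + 1 := by
  have hstep : partialSum ε (k + 1) - partialSum ε k
      ≤ ∑ i : Fin N, if (i : ℕ) = k then (1 : ℤ) else 0 := by
    rw [partialSum, partialSum, ← sum_sub_distrib]
    gcongr with i
    split_ifs <;> omega
  have hcard : ∑ i : Fin N, (if (i : ℕ) = k then (1 : ℤ) else 0) ≤ 1 := by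
    rw [sum_boole, Nat.cast_le_one]
    exact card_le_one.mpr fun a ha b hb => Fin.ext (by simp_all)
  omega

lemma partialSum_self (ε : Fin N → Bool) : partialSum ε N = 2 * upCount ε - N := by
  have hstep (i : Fin N) :
      (if ε i then (1 : ℤ) else -1) = 2 * (if ε i = true then 1 else 0) - 1 := by
    cases ε i <;> simp
  simp only [partialSum, Fin.is_lt, if_true, hstep]
  rw [sum_sub_distrib, ← mul_sum, sum_boole, upCount]
  simp

lemma partialSum_flipBefore (m : ℕ) (ε : Fin N → Bool) (k : ℕ) :
    partialSum (flipBefore m ε) k = partialSum ε k - 2 * partialSum ε (min k m) := by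
  rw [partialSum, partialSum, partialSum, mul_sum, ← sum_sub_distrib]
  refine sum_congr rfl fun i _ => ?_
  by_cases hk : (i : ℕ) < k <;> by_cases hm : (i : ℕ) < m <;> cases hε : ε i <;>
    simp [flipBefore, hk, hm, hε]

lemma partialSum_flipBefore_of_le {m k : ℕ} (ε : Fin N → Bool) (hk : k ≤ m) :
    partialSum (flipBefore m ε) k = -partialSum ε k := by
  rw [partialSum_flipBefore, min_eq_left hk]
  ring

-- Junk value `0` (as `sInf ∅ = 0`) for paths whose partial sums never reach `1`.
noncomputable def hitTime (ε : Fin N → Bool) : ℕ := sInf {k | 1 ≤ partialSum ε k}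

lemma partialSum_hitTime {ε : Fin N → Bool} (h : ∃ k, 1 ≤ partialSum ε k) :
    partialSum ε (hitTime ε) = 1 := by
  have hmem : 1 ≤ partialSum ε (hitTime ε) := Nat.sInf_mem h
  obtain ⟨m, hm⟩ : ∃ m, hitTime ε = m + 1 :=
    Nat.exists_eq_add_one.mpr (Nat.pos_of_ne_zero fun h0 => by
      rw [h0, partialSum_zero] at hmem; omega)
  have hbefore : ¬ 1 ≤ partialSum ε m := Nat.notMem_of_lt_sInf (show m < hitTime ε by omega)
  have := partialSum_succ_le ε m
  rw [hm] at hmem ⊢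
  omega

lemma partialSum_nonpos_of_lt_hitTime {ε : Fin N → Bool} {k : ℕ} (hk : k < hitTime ε) :
    partialSum ε k ≤ 0 := by
  have : ¬ 1 ≤ partialSum ε k := Nat.notMem_of_lt_sInf hk
  omega

noncomputable def reflect (ε : Fin N → Bool) : Fin N → Bool := flipBefore (hitTime ε) ε

lemma hitTime_le_of_reflect_eq {ε₁ ε₂ : Fin N → Bool} (h₁ : ∃ k, 1 ≤ partialSum ε₁ k)
    (heq : reflect ε₁ = reflect ε₂) : hitTime ε₂ ≤ hitTime ε₁ := by
  by_contra! hlt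
  have h₁' : partialSum (reflect ε₁) (hitTime ε₁) = -1 := by
    rw [reflect, partialSum_flipBefore_of_le ε₁ le_rfl, partialSum_hitTime h₁]
  have h₂' : partialSum (reflect ε₂) (hitTime ε₁) = -partialSum ε₂ (hitTime ε₁) :=
    partialSum_flipBefore_of_le ε₂ hlt.le
  have := partialSum_nonpos_of_lt_hitTime hlt
  rw [heq] at h₁'
  omega

lemma reflect_injOn : Set.InjOn (reflect (N := N)) {ε | ∃ k, 1 ≤ partialSum ε k} := by
  intro ε₁ h₁ ε₂ h₂ heq
  have htime : hitTime ε₁ = hitTime ε₂ :=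
    le_antisymm (hitTime_le_of_reflect_eq h₂ heq.symm) (hitTime_le_of_reflect_eq h₁ heq)
  have h : flipBefore (hitTime ε₂) ε₁ = flipBefore (hitTime ε₂) ε₂ := by
    simpa only [reflect, htime] using heq
  simpa only [flipBefore_flipBefore] using congrArg (flipBefore (hitTime ε₂)) h

lemma card_upCount_eq (t : ℕ) : #{ε : Fin N → Bool | upCount ε = t} = N.choose t := by
  rw [show N.choose t = #(powersetCard t (univ : Finset (Fin N))) by simp]
  refine card_bij' (fun ε _ => univ.filter fun i => ε i = true) (fun s _ i => decide (i ∈ s))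
    ?_ ?_ ?_ ?_ <;> intro x hx
  · simpa [upCount] using (mem_filter.mp hx).2
  · rw [mem_filter]
    simpa [upCount] using hx
  · simp
  · ext; simp

lemma card_upCount_succ_le {t : ℕ} (hN : N ≤ 2 * t) :
    #{ε : Fin N → Bool | upCount ε = t + 1} ≤
      #{ε : Fin N → Bool | ¬StaysNonneg ε ∧ upCount ε = t} := by
  have hhit {ε : Fin N → Bool} (hε : upCount ε = t + 1) : 1 ≤ partialSum ε N := by
    rw [partialSum_self, hε]; push_cast; omega
  refine card_le_card_of_injOn reflect (fun ε hε => ?_)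
    (reflect_injOn.mono fun ε hε =>
      (⟨N, hhit (mem_filter.mp hε).2⟩ : ∃ k, 1 ≤ partialSum ε k))
  replace hε := (mem_filter.mp hε).2
  have hex : ∃ k, 1 ≤ partialSum ε k := ⟨N, hhit hε⟩
  have hle : hitTime ε ≤ N := Nat.sInf_le (hhit hε)
  have hend : partialSum (reflect ε) N = partialSum ε N - 2 := by
    rw [reflect, partialSum_flipBefore, min_eq_right hle, partialSum_hitTime hex]
    ring
  have hup := partialSum_self (reflect ε)
  have hup' := partialSum_self ε
  rw [hε] at hup'
  have hneg : partialSum (reflect ε) (hitTime ε) = -1 := by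
    rw [reflect, partialSum_flipBefore_of_le ε le_rfl, partialSum_hitTime hex]
  refine mem_filter.mpr ⟨mem_univ _, fun h => ?_, by push_cast at hup'; omega⟩
  have := h _ hle
  omega

lemma card_staysNonneg_add_choose_succ_le {t : ℕ} (hN : N ≤ 2 * t) :
    #{ε : Fin N → Bool | StaysNonneg ε ∧ upCount ε = t} + N.choose (t + 1) ≤ N.choose t := by
  rw [← card_upCount_eq, ← card_upCount_eq,
    ← card_filter_add_card_filter_not (s := {ε : Fin N → Bool | upCount ε = t}) StaysNonneg,
    filter_filter, filter_filter]
  simp only [and_comm (a := upCount _ = t)]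
  exact Nat.add_le_add_left (card_upCount_succ_le hN) _

lemma card_staysNonneg_eq_zero {t : ℕ} (ht : 2 * t < N) :
    #{ε : Fin N → Bool | StaysNonneg ε ∧ upCount ε = t} = 0 := by
  refine card_eq_zero.mpr (filter_eq_empty_iff.mpr fun ε _ ⟨hpos, hup⟩ => ?_)
  have := partialSum_self ε
  have := hpos N le_rfl
  rw [hup] at *
  omega

lemma choose_sub_choose_succ_mul_le {n j : ℕ} (hj : j ≤ n) :
    ((2 * n).choose (n + j) - (2 * n).choose (n + j + 1)) * (n + 1) ≤
      (2 * j + 1) * n.centralBinom := by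
  have hrec : (2 * n).choose (n + j + 1) * (n + j + 1) = (2 * n).choose (n + j) * (n - j) := by
    rw [Nat.choose_succ_right_eq]; congr 1; omega
  have hmid : (2 * n).choose (n + j) ≤ n.centralBinom := Nat.choose_le_centralBinom _ _
  have hle : (2 * n).choose (n + j + 1) ≤ (2 * n).choose (n + j) := by
    nlinarith [Nat.sub_le n j]
  zify [hle, hj] at hrec hmid ⊢
  nlinarith

lemma card_staysNonneg_mul_le {n j : ℕ} (hj : j ≤ n) :
    #{ε : Fin (2 * n) → Bool | StaysNonneg ε ∧ upCount ε = n + j} * (n + 1) ≤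
      (2 * j + 1) * n.centralBinom := by
  have := card_staysNonneg_add_choose_succ_le (N := 2 * n) (t := n + j) (by omega)
  calc _ ≤ ((2 * n).choose (n + j) - (2 * n).choose (n + j + 1)) * (n + 1) := by gcongr; omega
    _ ≤ _ := choose_sub_choose_succ_mul_le hj

lemma card_false_eq (ε : Fin N → Bool) : #{i | ε i = false} = N - upCount ε := by
  have := card_filter_add_card_filter_not (s := univ) fun i => ε i = true
  simp only [Bool.not_eq_true, card_univ, Fintype.card_fin] at this
  rw [upCount]
  omega

lemma sum_ite_weight_eq_sum_card {R : Type*} [CommSemiring R] (P : (Fin N → Bool) → Prop)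
    (a b : R) :
    ∑ ε : Fin N → Bool, (if P ε then a ^ #{i | ε i = true} * b ^ #{i | ε i = false} else 0) =
      ∑ t ∈ range (N + 1), #{ε | P ε ∧ upCount ε = t} * (a ^ t * b ^ (N - t)) := by
  have hmaps (ε : Fin N → Bool) (_ : ε ∈ univ.filter P) : upCount ε ∈ range (N + 1) :=
    mem_range_succ_iff.mpr (card_le_univ _ |>.trans_eq (Fintype.card_fin N))
  simp only [← sum_filter, card_false_eq]
  rw [← sum_fiberwise_of_maps_to hmaps]
  refine sum_congr rfl fun t _ => ?_
  rw [filter_filter, ← nsmul_eq_mul, ← sum_const]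
  exact sum_congr rfl fun ε hε => by rw [← (mem_filter.mp hε).2.2, upCount]

lemma walkPos_eq (ε : Fin N → Bool) (k : ℕ) : walkPos N ε k = 1 + partialSum ε k := rfl

lemma stayPosProb_eq_sum_card (p : ℝ) (n : ℕ) :
    stayPosProb p n = ∑ t ∈ range (2 * n + 1),
      #{ε : Fin (2 * n) → Bool | StaysNonneg ε ∧ upCount ε = t} *
        (p ^ t * (1 - p) ^ (2 * n - t)) := by
  have hpos (ε : Fin (2 * n) → Bool) :
      (∀ k ≤ 2 * n, 1 ≤ walkPos (2 * n) ε k) ↔ StaysNonneg ε := by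
    simp only [walkPos_eq, StaysNonneg, le_add_iff_nonneg_right]
  simp only [stayPosProb, hpos]
  exact sum_ite_weight_eq_sum_card _ p (1 - p)

lemma pow_mul_one_sub_pow_eq {p : ℝ} (hp : p ≠ 1) {n j : ℕ} (hj : j ≤ n) :
    p ^ (n + j) * (1 - p) ^ (2 * n - (n + j)) = (p * (1 - p)) ^ n * (p / (1 - p)) ^ j := by
  obtain ⟨d, rfl⟩ := Nat.exists_eq_add_of_le hj
  have : 1 - p ≠ 0 := sub_ne_zero.mpr hp.symm
  rw [show 2 * (j + d) - (j + d + j) = d by omega, div_pow, mul_pow]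
  field_simp
  ring

lemma stayPosProb_le {p : ℝ} (hp0 : 0 ≤ p) (hp1 : p < 1) (n : ℕ) :
    stayPosProb p n ≤ n.centralBinom / (n + 1) * (p * (1 - p)) ^ n *
      ∑ j ∈ range (n + 1), (2 * j + 1) * (p / (1 - p)) ^ j := by
  have hlow : ∀ t ∈ range n, (#{ε : Fin (2 * n) → Bool | StaysNonneg ε ∧ upCount ε = t} : ℝ) *
      (p ^ t * (1 - p) ^ (2 * n - t)) = 0 := fun t ht => by
    rw [card_staysNonneg_eq_zero (by simp at ht; omega), Nat.cast_zero, zero_mul]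
  rw [stayPosProb_eq_sum_card, show 2 * n + 1 = n + (n + 1) by ring, sum_range_add,
    sum_eq_zero hlow, zero_add, mul_sum]
  refine sum_le_sum fun j hj => ?_
  replace hj : j ≤ n := Nat.lt_succ_iff.mp (mem_range.mp hj)
  have hcard : (#{ε : Fin (2 * n) → Bool | StaysNonneg ε ∧ upCount ε = n + j} : ℝ) ≤
      (2 * j + 1) * n.centralBinom / (n + 1) := by
    rw [le_div_iff₀ (by positivity)]
    exact_mod_cast card_staysNonneg_mul_le hj
  rw [pow_mul_one_sub_pow_eq hp1.ne hj]
  have : 0 ≤ (p * (1 - p)) ^ n * (p / (1 - p)) ^ j := by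
    have : 0 ≤ 1 - p := by linarith
    positivity
  calc _ ≤ (2 * j + 1) * n.centralBinom / (n + 1) *
        ((p * (1 - p)) ^ n * (p / (1 - p)) ^ j) := by gcongr
    _ = _ := by ring

end StayPositive

open StayPositive in
theorem stayPosProb_upper_bound (p : ℝ) (hp0 : 0 < p) (hp : p < 1 / 2) :
    ∃ C : ℝ, 0 < C ∧ ∀ n : ℕ, 1 ≤ n →
      stayPosProb p n ≤ C * (4 * p * (1 - p)) ^ n / (n : ℝ) ^ ((3 : ℝ) / 2) := by
  set r := p / (1 - p)
  have hr0 : 0 ≤ r := div_nonneg hp0.le (by linarith)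
  have hr1 : ‖r‖ < 1 := by
    rw [Real.norm_of_nonneg hr0, div_lt_one (by linarith)]; linarith
  have hsum : Summable fun j : ℕ => (2 * j + 1) * r ^ j := by
    simpa [add_mul, mul_assoc] using
      ((summable_pow_mul_geometric_of_norm_lt_one 1 hr1).mul_left 2).add
        (summable_geometric_of_norm_lt_one hr1)
  set K := ∑' j : ℕ, (2 * j + 1) * r ^ j
  refine ⟨K, hsum.tsum_pos (fun j => by positivity) 0 (by simp), fun n hn => ?_⟩
  calc stayPosProb p n
      ≤ n.centralBinom / (n + 1) * (p * (1 - p)) ^ n * ∑ j ∈ range (n + 1), (2 * j + 1) * r ^ j :=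
        stayPosProb_le hp0.le (by linarith) n
    _ ≤ 4 ^ n / (n : ℝ) ^ ((3 : ℝ) / 2) * (p * (1 - p)) ^ n * K := by
        have : 0 ≤ p * (1 - p) := mul_nonneg hp0.le (by linarith)
        gcongr ?_ * _ * ?_
        · exact Nat.centralBinom_div_succ_le hn
        · exact hsum.sum_le_tsum _ fun j _ => by positivity
    _ = K * (4 * p * (1 - p)) ^ n / (n : ℝ) ^ ((3 : ℝ) / 2) := by
        simp only [mul_pow]; ring
end

section
/- For a nearest-neighbor random walk started at 1 with up-probability p ∈ (0,1), the probability q_n that the walk stays strictly positive for 2n steps satisfies q_n ≥ c · (4p(1-p))^n / n^{3/2} for some absolute constant c > 0, for all n ≥ 1. -/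
open scoped Classical

/- A Dyck word of semilength `n`, read as a walk from `1` with `U = +1` and `D = -1`, never drops
below `1` and has exactly `n` up-steps, so each of the `catalan n` Dyck words contributes
`p ^ n * (1 - p) ^ n` to `stayPosProb p n`. The bound then follows from
`catalan n ≥ 4 ^ n / (4 n ^ (3/2))`, a consequence of `(n + 1) * catalan n = C(2n, n)` and
`16 ^ n ≤ 4 n C(2n, n) ^ 2`; the latter is proved by induction, using
`(n + 1) C(2n + 2, n + 1) = 2 (2n + 1) C(2n, n)` and `4 n (n + 1) ≤ (2n + 1) ^ 2`. -/

open DyckStep Finset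

lemma walkPos_comp_cast {m m' : ℕ} (h : m = m') (ε : Fin m → Bool) (k : ℕ) :
    walkPos m' (ε ∘ Fin.cast h.symm) k = walkPos m ε k := by
  subst h; rfl

lemma walkPos_self (m : ℕ) (ε : Fin m → Bool) :
    walkPos m ε m = 1 + (#{i | ε i = true} : ℤ) - #{i | ε i = false} := by
  have hsplit : ∀ i : Fin m, (if ε i then (1 : ℤ) else -1)
      = (if ε i = true then 1 else 0) - (if ε i = false then 1 else 0) := by
    intro i; cases ε i <;> simp
  simp only [walkPos, Fin.is_lt, if_true, hsplit, sum_sub_distrib, sum_boole]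
  ring

lemma card_filter_eq_of_walkPos_two_mul_eq_one {n : ℕ} {ε : Fin (2 * n) → Bool}
    (h : walkPos (2 * n) ε (2 * n) = 1) :
    #{i | ε i = true} = n ∧ #{i | ε i = false} = n := by
  have hsum := card_filter_add_card_filter_not (s := univ) (fun i => ε i = true)
  simp only [card_univ, Fintype.card_fin, Bool.not_eq_true] at hsum
  rw [walkPos_self] at h
  omega

def stepSeq (l : List DyckStep) (i : Fin l.length) : Bool := l[i] = U

lemma walkPos_stepSeq (l : List DyckStep) (k : ℕ) :
    walkPos l.length (stepSeq l) k = 1 + (l.take k).count U - (l.take k).count D := by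
  induction l generalizing k with
  | nil => simp [walkPos]
  | cons a t ih =>
    cases k with
    | zero => simp [walkPos]
    | succ k =>
      have := ih k
      simp only [walkPos] at this ⊢
      erw [Fin.sum_univ_succ]
      simp only [stepSeq] at this ⊢
      rcases a.dichotomy with rfl | rfl <;> simp at this ⊢ <;> omega

lemma stepSeq_injective {l l' : List DyckStep} (h : l.length = l'.length)
    (hs : stepSeq l = stepSeq l' ∘ Fin.cast h) : l = l' := by
  refine List.ext_getElem h fun i hi hi' => ?_
  have := congrFun hs ⟨i, hi⟩
  simp only [stepSeq, Function.comp_apply, Fin.cast_mk, decide_eq_decide] at this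
  rcases l[i].dichotomy with hl | hl <;> rcases l'[i].dichotomy with hl' | hl' <;> simp_all

namespace DyckWord

lemma length_eq_two_mul {n : ℕ} (w : {w : DyckWord // w.semilength = n}) :
    w.1.toList.length = 2 * n := by
  rw [← two_mul_semilength_eq_length, w.2]

noncomputable def stepsOfSemilength (n : ℕ) (w : {w : DyckWord // w.semilength = n}) :
    Fin (2 * n) → Bool :=
  stepSeq w.1.toList ∘ Fin.cast (length_eq_two_mul w).symm

lemma walkPos_stepsOfSemilength {n : ℕ} (w : {w : DyckWord // w.semilength = n}) (k : ℕ) :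
    walkPos (2 * n) (stepsOfSemilength n w) k
      = 1 + (w.1.toList.take k).count U - (w.1.toList.take k).count D := by
  rw [stepsOfSemilength, walkPos_comp_cast (length_eq_two_mul w), walkPos_stepSeq]

lemma one_le_walkPos_stepsOfSemilength {n : ℕ} (w : {w : DyckWord // w.semilength = n}) (k : ℕ) :
    1 ≤ walkPos (2 * n) (stepsOfSemilength n w) k := by
  have := w.1.count_D_le_count_U k
  rw [walkPos_stepsOfSemilength]
  omega

lemma walkPos_stepsOfSemilength_two_mul {n : ℕ} (w : {w : DyckWord // w.semilength = n}) :
    walkPos (2 * n) (stepsOfSemilength n w) (2 * n) = 1 := by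
  rw [walkPos_stepsOfSemilength, ← length_eq_two_mul w, List.take_length, w.1.count_U_eq_count_D]
  ring

lemma stepsOfSemilength_injective (n : ℕ) : Function.Injective (stepsOfSemilength n) := by
  intro w w' h
  refine Subtype.ext (DyckWord.ext (stepSeq_injective
    ((length_eq_two_mul w).trans (length_eq_two_mul w').symm) ?_))
  funext i
  simpa [stepsOfSemilength] using congrFun h (Fin.cast (length_eq_two_mul w) i)

end DyckWord

open DyckWord in
lemma catalan_mul_le_stayPosProb {p : ℝ} (hp0 : 0 ≤ p) (hp1 : p ≤ 1) (n : ℕ) :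
    catalan n * (p ^ n * (1 - p) ^ n) ≤ stayPosProb p n := by
  calc (catalan n : ℝ) * (p ^ n * (1 - p) ^ n)
      = ∑ ε ∈ univ.image (stepsOfSemilength n),
          if ∀ k ≤ 2 * n, 1 ≤ walkPos (2 * n) ε k then
            p ^ #{i | ε i = true} * (1 - p) ^ #{i | ε i = false}
          else 0 := by
        rw [sum_image fun w _ w' _ h => stepsOfSemilength_injective n h,
          ← card_dyckWord_semilength_eq_catalan, ← card_univ, ← nsmul_eq_mul, ← sum_const]
        refine sum_congr rfl fun w _ => ?_
        obtain ⟨hU, hD⟩ :=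
          card_filter_eq_of_walkPos_two_mul_eq_one (walkPos_stepsOfSemilength_two_mul w)
        rw [if_pos fun k _ => one_le_walkPos_stepsOfSemilength w k, hU, hD]
    _ ≤ stayPosProb p n :=
        sum_le_sum_of_subset_of_nonneg (subset_univ _) fun _ _ _ => by positivity

lemma Nat.sixteen_pow_le_four_mul_mul_centralBinom_sq {n : ℕ} (hn : 1 ≤ n) :
    16 ^ n ≤ 4 * n * n.centralBinom ^ 2 := by
  induction n, hn using Nat.le_induction with
  | base => simp [Nat.centralBinom]
  | succ n _ ih =>
    refine Nat.le_of_mul_le_mul_left ?_ n.succ_pos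
    calc (n + 1) * 16 ^ (n + 1) = 16 * (n + 1) * 16 ^ n := by ring
      _ ≤ 16 * (n + 1) * (4 * n * n.centralBinom ^ 2) := Nat.mul_le_mul_left _ ih
      _ ≤ 16 * (2 * n + 1) ^ 2 * n.centralBinom ^ 2 := by
          rw [← mul_assoc, ← mul_assoc]
          exact Nat.mul_le_mul_right _ (by nlinarith)
      _ = 4 * ((n + 1) * (n + 1).centralBinom) ^ 2 := by
          rw [Nat.succ_mul_centralBinom_succ]; ring
      _ = (n + 1) * (4 * (n + 1) * (n + 1).centralBinom ^ 2) := by ring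

lemma four_pow_div_le_catalan {n : ℕ} (hn : 1 ≤ n) :
    (4 : ℝ) ^ n / (4 * (n : ℝ) ^ ((3 : ℝ) / 2)) ≤ catalan n := by
  have hnat : 16 ^ n ≤ 16 * n ^ 3 * catalan n ^ 2 :=
    calc 16 ^ n ≤ 4 * n * n.centralBinom ^ 2 := Nat.sixteen_pow_le_four_mul_mul_centralBinom_sq hn
      _ = 4 * n * ((n + 1) * catalan n) ^ 2 := by rw [succ_mul_catalan_eq_centralBinom]
      _ ≤ 4 * n * ((2 * n) * catalan n) ^ 2 := by gcongr; omega
      _ = 16 * n ^ 3 * catalan n ^ 2 := by ring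
  have hrpow : ((n : ℝ) ^ ((3 : ℝ) / 2)) ^ 2 = (n : ℝ) ^ 3 := by
    rw [← Real.rpow_mul_natCast (Nat.cast_nonneg n)]
    norm_num
  rw [div_le_iff₀ (by positivity)]
  refine le_of_pow_le_pow_left₀ two_ne_zero (by positivity) ?_
  calc ((4 : ℝ) ^ n) ^ 2 = (16 ^ n : ℕ) := by push_cast; rw [← pow_mul, pow_mul']; norm_num
    _ ≤ (16 * n ^ 3 * catalan n ^ 2 : ℕ) := Nat.cast_le.mpr hnat
    _ = (catalan n * (4 * (n : ℝ) ^ ((3 : ℝ) / 2))) ^ 2 := by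
        push_cast; rw [mul_pow, mul_pow, hrpow]; ring

theorem stayPosProb_lower_bound :
    ∃ c : ℝ, 0 < c ∧ ∀ p : ℝ, 0 < p → p < 1 → ∀ n : ℕ, 1 ≤ n →
      c * (4 * p * (1 - p)) ^ n / (n : ℝ) ^ ((3 : ℝ) / 2) ≤ stayPosProb p n := by
  refine ⟨1 / 4, by norm_num, fun p hp0 hp1 n hn => ?_⟩
  calc 1 / 4 * (4 * p * (1 - p)) ^ n / (n : ℝ) ^ ((3 : ℝ) / 2)
      = 4 ^ n / (4 * (n : ℝ) ^ ((3 : ℝ) / 2)) * (p ^ n * (1 - p) ^ n) := by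
        rw [mul_pow, mul_pow]; ring
    _ ≤ catalan n * (p ^ n * (1 - p) ^ n) := by gcongr; exact four_pow_div_le_catalan hn
    _ ≤ stayPosProb p n := catalan_mul_le_stayPosProb hp0.le hp1.le n
end

section
/- Fix p ∈ (0,1) and ε > 0. There exists M such that for all n, m > M: with T_n as the sum of t_0 = m plus n i.i.d. variables each 0 w.p. p and m w.p. 1-p, P(T_n ≤ n+1) ≤ (p + ε)^n. -/
/-!
Exponential tilting. If `c` of the `n` coins show `m`, then `m + c * m ≤ n + 1` forces
`c * m ≤ n`, so for `t ≤ r ^ M` and `m > M` the weight `t ^ c` is at most `r ^ n`. Multiplying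
every admissible outcome by `t ^ c / t ^ c` thus bounds the probability by `r ^ n` times the
total mass `((1 - p) / t + p) ^ n` of the tilted weights. With `t = 2 / ε` the latter is at most
`(p + ε / 2) ^ n`, and `r = (p + ε) / (p + ε / 2)` turns the product into `(p + ε) ^ n`.
-/

open Finset

section Tilting

variable {ι K : Type*} [Fintype ι] [Field K]

theorem prod_ite_eq_pow_card_mul_prod_ite (v : ι → Bool) (a b : K) {t : K} (ht : t ≠ 0) :
    ∏ i, (if v i then a else b) = t ^ #{i | v i} * ∏ i, (if v i then a / t else b) := by
  rw [← prod_const, prod_filter, ← prod_mul_distrib]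
  refine prod_congr rfl fun i _ => ?_
  split_ifs <;> field_simp

variable [DecidableEq ι] [LinearOrder K] [IsStrictOrderedRing K]

theorem sum_ite_prod_le_mul_add_pow (Q : (ι → Bool) → Prop) [DecidablePred Q] {a b t C : K}
    (ha : 0 ≤ a) (hb : 0 ≤ b) (ht : 0 < t) (hC₀ : 0 ≤ C) (hC : ∀ v, Q v → t ^ #{i | v i} ≤ C) :
    ∑ v : ι → Bool, (if Q v then ∏ i, (if v i then a else b) else 0) ≤
      C * (a / t + b) ^ Fintype.card ι := by
  calc _ ≤ ∑ v : ι → Bool, C * ∏ i, (if v i then a / t else b) := by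
        refine sum_le_sum fun v _ => ?_
        have hprod : 0 ≤ ∏ i, (if v i then a / t else b) :=
          prod_nonneg fun i _ => by split_ifs <;> positivity
        split_ifs with hQ
        · rw [prod_ite_eq_pow_card_mul_prod_ite v a b ht.ne']
          exact mul_le_mul_of_nonneg_right (hC v hQ) hprod
        · exact mul_nonneg hC₀ hprod
    _ = C * (a / t + b) ^ Fintype.card ι := by
        rw [← mul_sum, ← Fintype.prod_sum (fun _ (c : Bool) => if c then a / t else b), prod_const,
          card_univ, Fintype.sum_bool]
        simp only [Bool.false_eq_true, if_true, if_false]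

end Tilting

theorem pow_le_pow_of_le_pow_of_mul_le {R : Type*} [Semiring R] [PartialOrder R] [IsOrderedRing R]
    {t r : R} {c M n : ℕ} (ht : 0 ≤ t) (hr : 1 ≤ r) (htr : t ≤ r ^ M) (hcn : c * M ≤ n) :
    t ^ c ≤ r ^ n :=
  calc t ^ c ≤ (r ^ M) ^ c := pow_le_pow_left₀ ht htr c
    _ = r ^ (c * M) := by rw [← pow_mul, mul_comm]
    _ ≤ r ^ n := pow_le_pow_right₀ hr hcn

theorem lemma_tau (p : ℝ) (hp0 : 0 < p) (hp1 : p < 1) (ε : ℝ) (hε : 0 < ε) :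
    ∃ M : ℕ, ∀ n m : ℕ, M < n → M < m →
      (∑ v : Fin n → Bool,
          if (m : ℝ) + ∑ i, (if v i then (m : ℝ) else 0) ≤ (n : ℝ) + 1 then
            ∏ i, (if v i then 1 - p else p)
          else 0)
        ≤ (p + ε) ^ n := by
  have hq : 0 < p + ε / 2 := by positivity
  have hr : 1 < (p + ε) / (p + ε / 2) := (one_lt_div hq).2 (by linarith)
  obtain ⟨M, hM⟩ := pow_unbounded_of_one_lt (2 / ε) hr
  refine ⟨M, fun n m _ hm => ?_⟩
  have hcount : ∀ v : Fin n → Bool, (m : ℝ) + ∑ i, (if v i then (m : ℝ) else 0) ≤ n + 1 →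
      (2 / ε) ^ #{i | v i} ≤ ((p + ε) / (p + ε / 2)) ^ n := by
    intro v hv
    rw [← sum_filter, sum_const, nsmul_eq_mul] at hv
    have hm1 : (1 : ℝ) ≤ m := by exact_mod_cast hm.trans_le' (Nat.zero_le M)
    have hcm : #{i | v i} * m ≤ n := by exact_mod_cast (by linarith : (#{i | v i} * m : ℝ) ≤ n)
    exact pow_le_pow_of_le_pow_of_mul_le (by positivity) hr.le hM.le
      ((Nat.mul_le_mul_left _ hm.le).trans hcm)
  have hbase : (1 - p) / (2 / ε) + p ≤ p + ε / 2 := by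
    rw [div_div_eq_mul_div]
    nlinarith
  calc _ ≤ ((p + ε) / (p + ε / 2)) ^ n * ((1 - p) / (2 / ε) + p) ^ n := by
        simpa using sum_ite_prod_le_mul_add_pow _ (a := 1 - p) (by linarith) hp0.le
          (by positivity) (by positivity) hcount
    _ ≤ ((p + ε) / (p + ε / 2)) ^ n * (p + ε / 2) ^ n := by
        gcongr
    _ = (p + ε) ^ n := by rw [← mul_pow, div_mul_cancel₀ _ hq.ne']
end
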